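/- arXiv:1801.03765 — 6 statements merged into one kernel-verified Lean document; each statement's English description precedes it below -/
import Mathlib

section
/- Let A, B ∈ ℝ^{n×n} be monotone matrices, t > 0, and let H_t = (I + tB)^{−1}(I + tA)^{−1}(I + t²AB), assuming I+tA and I+tB are invertible. If λ ∈ ℂ is an eigenvalue of H_t with eigenvector z ∈ ℂ^n and λ ≠ 1, then setting c = Re⟨Bz, z⟩ / (t^{−1}‖z‖² + t‖Bz‖²) one has c ≥ 0 and |λ − 1/2| ≤ sqrt(1/4 − c/(1+2c)) ≤ 1/2; in particular λ lies in the closed disk of radius 1/2 centered at 1/2. -/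
/-!
Write `w = B z` and `R = Re λ - |λ|² = 1/4 - |λ - 1/2|²`. The eigen-equation
`(I + t²AB) z = λ (I + tA)(I + tB) z` says exactly that `u = λ z - t(1 - λ) w` satisfies
`t A u = (1 - λ) z - tλ w`. Monotonicity of `A` gives `0 ≤ Re ⟨u, tAu⟩`, which expands to
`R (‖z‖² + t²‖w‖²) ≥ t (1 - 2R) Re ⟨z, w⟩`; dividing by `‖z‖² + t²‖w‖² = t (t⁻¹‖z‖² + t‖w‖²)`
gives `(1 - 2R) c ≤ R`, i.e. `c / (1 + 2c) ≤ R`.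

Real matrices act on `EuclideanSpace ℂ (Fin n)` through their complexification, which stays
monotone since `Re ⟨x, Mx⟩` is the sum of the real quadratic forms of `Re x` and `Im x`;
monotonicity also makes `I + tA` and `I + tB` invertible.
-/

open Matrix Complex

open scoped InnerProductSpace

lemma Complex.norm_sub_half_le_sqrt {lam : ℂ} {x : ℝ} (h : x ≤ lam.re - normSq lam) :
    ‖lam - 1 / 2‖ ≤ √(1 / 4 - x) := by
  apply Real.le_sqrt_of_sq_le
  rw [Complex.sq_norm, normSq_apply] at *
  simp only [sub_re, sub_im, div_re, div_im, one_re, one_im]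
  norm_num
  linarith

section InnerProductSpace

variable {E : Type*} [NormedAddCommGroup E] [InnerProductSpace ℂ E]

lemma injective_one_add_smul_of_re_inner_nonneg {A : E →L[ℂ] E}
    (hA : ∀ x, 0 ≤ re ⟪x, A x⟫_ℂ) {t : ℝ} (ht : 0 ≤ t) :
    Function.Injective (1 + (t : ℂ) • A : E →L[ℂ] E) := by
  rw [injective_iff_map_eq_zero]
  intro x hx
  have h : re ⟪x, (1 + (t : ℂ) • A) x⟫_ℂ = ‖x‖ ^ 2 + t * re ⟪x, A x⟫_ℂ := by
    rw [_root_.add_apply, one_apply_eq_self, _root_.smul_apply, inner_add_right,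
      inner_smul_right, add_re, re_ofReal_mul]
    exact congrArg (· + _) (inner_self_eq_norm_sq (𝕜 := ℂ) x)
  rw [hx, inner_zero_right, zero_re] at h
  have hx2 : ‖x‖ ^ 2 ≤ 0 := by linarith [mul_nonneg ht (hA x)]
  exact norm_eq_zero.mp (pow_eq_zero_iff two_ne_zero |>.mp (le_antisymm hx2 (sq_nonneg _)))

namespace DouglasRachford

lemma smul_apply_combination_eq {A B : E →L[ℂ] E} {t : ℝ} {lam : ℂ} {z : E}
    (heig : (1 + ((t : ℂ) ^ 2) • (A * B)) z = lam • ((1 + (t : ℂ) • A) * (1 + (t : ℂ) • B)) z) :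
    (t : ℂ) • A (lam • z - ((t : ℂ) * (1 - lam)) • B z) =
      (1 - lam) • z - ((t : ℂ) * lam) • B z := by
  simp only [_root_.add_apply, one_apply_eq_self, _root_.smul_apply, mul_apply_eq_comp,
    map_add, map_smul] at heig
  rw [map_sub, map_smul, map_smul]
  linear_combination (norm := module) -heig

lemma re_inner_combination_eq (z w : E) (lam : ℂ) (t : ℝ) :
    re ⟪lam • z - ((t : ℂ) * (1 - lam)) • w, (1 - lam) • z - ((t : ℂ) * lam) • w⟫_ℂ =
      (lam.re - normSq lam) * (‖z‖ ^ 2 + t ^ 2 * ‖w‖ ^ 2)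
        - t * (1 - 2 * (lam.re - normSq lam)) * re ⟪z, w⟫_ℂ := by
  simp only [inner_sub_left, inner_sub_right, inner_smul_left, inner_smul_right,
    inner_self_eq_norm_sq_to_K, RCLike.ofReal_eq_complex_ofReal, ← ofReal_pow,
    ← inner_conj_symm z w]
  simp only [sub_re, mul_re, mul_im, conj_re, conj_im, sub_im, one_re, one_im, ofReal_re,
    ofReal_im, normSq_apply]
  ring

theorem eigenvalue_localization {A B : E →L[ℂ] E}
    (hA : ∀ x, 0 ≤ re ⟪x, A x⟫_ℂ) (hB : ∀ x, 0 ≤ re ⟪x, B x⟫_ℂ) {t : ℝ} (ht : 0 < t)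
    {lam : ℂ} {z : E} (hz : z ≠ 0)
    (heig : (1 + ((t : ℂ) ^ 2) • (A * B)) z = lam • ((1 + (t : ℂ) • A) * (1 + (t : ℂ) • B)) z)
    {c : ℝ} (hc : c = re ⟪z, B z⟫_ℂ / (t⁻¹ * ‖z‖ ^ 2 + t * ‖B z‖ ^ 2)) :
    0 ≤ c ∧ ‖lam - 1 / 2‖ ≤ √(1 / 4 - c / (1 + 2 * c)) ∧
      √(1 / 4 - c / (1 + 2 * c)) ≤ 1 / 2 := by
  set R := lam.re - normSq lam
  set d := t⁻¹ * ‖z‖ ^ 2 + t * ‖B z‖ ^ 2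
  have hd : 0 < d := by positivity
  have hc0 : 0 ≤ c := hc ▸ div_nonneg (hB z) hd.le
  have hmono : 0 ≤ R * (‖z‖ ^ 2 + t ^ 2 * ‖B z‖ ^ 2) - t * (1 - 2 * R) * re ⟪z, B z⟫_ℂ := by
    rw [← re_inner_combination_eq, ← smul_apply_combination_eq heig, inner_smul_right,
      re_ofReal_mul]
    exact mul_nonneg ht.le (hA _)
  have hs : re ⟪z, B z⟫_ℂ = c * d := by rw [hc, div_mul_cancel₀ _ hd.ne']
  have hp : ‖z‖ ^ 2 + t ^ 2 * ‖B z‖ ^ 2 = t * d := by simp only [d]; field_simp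
  rw [hs, hp] at hmono
  have hcR : 0 ≤ R - (1 - 2 * R) * c :=
    nonneg_of_mul_nonneg_right (by linarith) (mul_pos ht hd)
  have hc2 : c / (1 + 2 * c) ≤ R := by
    rw [div_le_iff₀ (by positivity)]
    linarith
  refine ⟨hc0, norm_sub_half_le_sqrt hc2, ?_⟩
  rw [Real.sqrt_le_left (by norm_num)]
  linarith [div_nonneg hc0 (by positivity : (0 : ℝ) ≤ 1 + 2 * c)]

end DouglasRachford

end InnerProductSpace

namespace Matrix

variable {ι : Type*} [Fintype ι]

lemma re_map_ofReal_mulVec_dotProduct_star (M : Matrix ι ι ℝ) (x : ι → ℂ) :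
    ((M.map ofReal *ᵥ x) ⬝ᵥ star x).re =
      (fun j => (x j).re) ⬝ᵥ (M *ᵥ fun j => (x j).re)
        + (fun j => (x j).im) ⬝ᵥ (M *ᵥ fun j => (x j).im) := by
  simp only [dotProduct, mulVec, Matrix.map_apply, Pi.star_apply, re_sum, mul_re, mul_im,
    im_sum, ofReal_re, ofReal_im, star_def, conj_re, conj_im]
  rw [← Finset.sum_add_distrib]
  congr 1; funext j
  rw [Finset.sum_mul, Finset.sum_mul, Finset.mul_sum, Finset.mul_sum,
    ← Finset.sum_sub_distrib, ← Finset.sum_add_distrib]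
  congr 1; funext k
  ring

lemma re_inner_toEuclideanCLM_map_ofReal_nonneg [DecidableEq ι] {M : Matrix ι ι ℝ}
    (hM : ∀ x, 0 ≤ x ⬝ᵥ (M *ᵥ x)) (x : EuclideanSpace ℂ ι) :
    0 ≤ re ⟪x, toEuclideanCLM (n := ι) (𝕜 := ℂ) (M.map ofReal) x⟫_ℂ := by
  rw [EuclideanSpace.inner_eq_star_dotProduct, ofLp_toEuclideanCLM,
    re_map_ofReal_mulVec_dotProduct_star]
  exact add_nonneg (hM _) (hM _)

lemma isUnit_one_add_smul_of_re_inner_nonneg [DecidableEq ι] {M : Matrix ι ι ℂ}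
    (hM : ∀ x, 0 ≤ re ⟪x, toEuclideanCLM (n := ι) (𝕜 := ℂ) M x⟫_ℂ) {t : ℝ} (ht : 0 ≤ t) :
    IsUnit (1 + (t : ℂ) • M) := by
  rw [← mulVec_injective_iff_isUnit]
  have h := injective_one_add_smul_of_re_inner_nonneg hM ht
  rw [← map_one (toEuclideanCLM (n := ι) (𝕜 := ℂ)), ← map_smul, ← map_add] at h
  exact (WithLp.ofLp_injective 2).comp (h.comp (WithLp.toLp_injective 2))

lemma mulVec_eq_smul_mul_mulVec_of_nonsing_inv [DecidableEq ι] {R : Type*} [CommRing R]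
    {P Q N : Matrix ι ι R} (hP : IsUnit P) (hQ : IsUnit Q) {lam : R} {z : ι → R}
    (h : (Q⁻¹ * P⁻¹ * N) *ᵥ z = lam • z) : N *ᵥ z = lam • ((P * Q) *ᵥ z) := by
  have hPQ : IsUnit (P * Q).det := (isUnit_iff_isUnit_det _).mp (hP.mul hQ)
  rw [← Matrix.mul_inv_rev] at h
  calc N *ᵥ z = (P * Q) *ᵥ (((P * Q)⁻¹ * N) *ᵥ z) := by
        rw [mulVec_mulVec, mul_nonsing_inv_cancel_left _ _ hPQ]
    _ = lam • ((P * Q) *ᵥ z) := by rw [h, mulVec_smul]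

end Matrix

theorem DR_eigenvalue_localization_general {n : ℕ}
    (A B : Matrix (Fin n) (Fin n) ℝ)
    (hA : ∀ x : Fin n → ℝ, 0 ≤ x ⬝ᵥ (A *ᵥ x))
    (hB : ∀ x : Fin n → ℝ, 0 ≤ x ⬝ᵥ (B *ᵥ x))
    (t : ℝ) (ht : 0 < t)
    (lam : ℂ) (z : Fin n → ℂ) (hz : z ≠ 0)
    (heig :
      ((1 + (t : ℂ) • B.map Complex.ofReal)⁻¹ *
        (1 + (t : ℂ) • A.map Complex.ofReal)⁻¹ *
        (1 + ((t : ℂ))^2 • (A.map Complex.ofReal * B.map Complex.ofReal))) *ᵥ z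
        = lam • z)
    (c : ℝ)
    (hc : c = (((B.map Complex.ofReal *ᵥ z) ⬝ᵥ star z).re) /
        (t⁻¹ * ‖(WithLp.equiv 2 (Fin n → ℂ)).symm z‖ ^ 2 +
          t * ‖(WithLp.equiv 2 (Fin n → ℂ)).symm (B.map Complex.ofReal *ᵥ z)‖ ^ 2)) :
    0 ≤ c ∧ ‖lam - 1/2‖ ≤ Real.sqrt (1/4 - c/(1 + 2*c)) ∧
      Real.sqrt (1/4 - c/(1 + 2*c)) ≤ 1/2 := by
  have hA' := re_inner_toEuclideanCLM_map_ofReal_nonneg hA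
  have hB' := re_inner_toEuclideanCLM_map_ofReal_nonneg hB
  have heig' := mulVec_eq_smul_mul_mulVec_of_nonsing_inv
    (isUnit_one_add_smul_of_re_inner_nonneg hA' ht.le)
    (isUnit_one_add_smul_of_re_inner_nonneg hB' ht.le) heig
  have hTeig := congrArg (WithLp.toLp 2) heig'
  rw [WithLp.toLp_smul, ← toEuclideanCLM_toLp, ← toEuclideanCLM_toLp] at hTeig
  simp only [map_add, map_mul, map_one, map_smul] at hTeig
  exact DouglasRachford.eigenvalue_localization hA' hB' ht (z := WithLp.toLp 2 z)
    (by simpa using hz) hTeig hc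

/-- Eigenvalue localization for the Douglas–Rachford iteration matrix
`H_t = (I + tB)⁻¹ (I + tA)⁻¹ (I + t²AB)` of two monotone matrices. -/
theorem DR_eigenvalue_localization {n : ℕ}
    (A B : Matrix (Fin n) (Fin n) ℝ)
    (hA : ∀ x : Fin n → ℝ, 0 ≤ x ⬝ᵥ (A *ᵥ x))
    (hB : ∀ x : Fin n → ℝ, 0 ≤ x ⬝ᵥ (B *ᵥ x))
    (t : ℝ) (ht : 0 < t)
    (hAinv : IsUnit (1 + t • A)) (hBinv : IsUnit (1 + t • B))
    (lam : ℂ) (z : Fin n → ℂ) (hz : z ≠ 0)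
    (heig :
      ((1 + (t : ℂ) • B.map Complex.ofReal)⁻¹ *
        (1 + (t : ℂ) • A.map Complex.ofReal)⁻¹ *
        (1 + ((t : ℂ))^2 • (A.map Complex.ofReal * B.map Complex.ofReal))) *ᵥ z
        = lam • z)
    (hlam : lam ≠ 1)
    (c : ℝ)
    (hc : c = (((B.map Complex.ofReal *ᵥ z) ⬝ᵥ star z).re) /
        (t⁻¹ * ‖(WithLp.equiv 2 (Fin n → ℂ)).symm z‖ ^ 2 +
          t * ‖(WithLp.equiv 2 (Fin n → ℂ)).symm (B.map Complex.ofReal *ᵥ z)‖ ^ 2)) :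
    0 ≤ c ∧ ‖lam - 1/2‖ ≤ Real.sqrt (1/4 - c/(1 + 2*c)) ∧
      Real.sqrt (1/4 - c/(1 + 2*c)) ≤ 1/2 :=
  DR_eigenvalue_localization_general A B hA hB t ht lam z hz heig c hc
end

section
/- Let A, B ∈ ℝ^{n×n} be monotone matrices and t > 0 such that I + tA and I + tB are invertible. Then the eigenspace of the Douglas–Rachford iteration matrix H_t = (I + tB)^{−1}(I + tA)^{−1}(I + t²AB) for the eigenvalue 1 equals the kernel of A + B; i.e., H_t x = x if and only if (A + B)x = 0. -/
/-!
Since `(I + tA)(I + tB) = (I + t²AB) + t(A + B)`, the iteration matrix is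
`H_t = M⁻¹ (M - t(A + B))` with `M = (I + tA)(I + tB)` invertible. Hence `H_t x = x` iff
`M x - t(A + B) x = M x`, i.e. iff `(A + B) x = 0` as `t ≠ 0`.
-/

open Matrix

theorem one_add_smul_mul_one_add_smul {R α : Type*} [CommRing R] [Ring α] [Algebra R α]
    (t : R) (a b : α) :
    (1 + t • a) * (1 + t • b) = (1 + t ^ 2 • (a * b)) + t • (a + b) := by
  simp only [mul_add, add_mul, mul_one, one_mul, smul_mul_smul_comm, smul_add, sq]
  abel

theorem Matrix.inv_mul_mulVec_eq_self_iff {m K : Type*} [Fintype m] [DecidableEq m] [CommRing K]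
    {M : Matrix m m K} (hM : IsUnit M) (C : Matrix m m K) (x : m → K) :
    (M⁻¹ * C) *ᵥ x = x ↔ C *ᵥ x = M *ᵥ x := by
  have hdet : IsUnit M.det := (isUnit_iff_isUnit_det M).mp hM
  constructor
  · intro h
    calc C *ᵥ x = M *ᵥ (M⁻¹ * C) *ᵥ x := by
          rw [mulVec_mulVec, ← mul_assoc, mul_nonsing_inv M hdet, one_mul]
      _ = M *ᵥ x := by rw [h]
  · intro h
    rw [← mulVec_mulVec, h, mulVec_mulVec, nonsing_inv_mul M hdet, one_mulVec]

theorem DR_fixed_points_eq_ker_general {n : ℕ}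
    (A B : Matrix (Fin n) (Fin n) ℝ)
    (t : ℝ) (ht : 0 < t)
    (hAinv : IsUnit (1 + t • A)) (hBinv : IsUnit (1 + t • B))
    (x : Fin n → ℝ) :
    ((1 + t • B)⁻¹ * (1 + t • A)⁻¹ * (1 + t^2 • (A * B))) *ᵥ x = x ↔
      (A + B) *ᵥ x = 0 := by
  rw [← Matrix.mul_inv_rev, inv_mul_mulVec_eq_self_iff (hAinv.mul hBinv),
    one_add_smul_mul_one_add_smul, add_mulVec _ (t • (A + B)), left_eq_add, smul_mulVec,
    smul_eq_zero, or_iff_right ht.ne']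

/-- The eigenspace of the Douglas–Rachford iteration matrix
`H_t = (I + tB)⁻¹ (I + tA)⁻¹ (I + t²AB)` for the eigenvalue `1` is `ker (A + B)`. -/
theorem DR_fixed_points_eq_ker {n : ℕ}
    (A B : Matrix (Fin n) (Fin n) ℝ)
    (hA : ∀ x : Fin n → ℝ, 0 ≤ x ⬝ᵥ (A *ᵥ x))
    (hB : ∀ x : Fin n → ℝ, 0 ≤ x ⬝ᵥ (B *ᵥ x))
    (t : ℝ) (ht : 0 < t)
    (hAinv : IsUnit (1 + t • A)) (hBinv : IsUnit (1 + t • B))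
    (x : Fin n → ℝ) :
    ((1 + t • B)⁻¹ * (1 + t • A)⁻¹ * (1 + t^2 • (A * B))) *ᵥ x = x ↔
      (A + B) *ᵥ x = 0 :=
  DR_fixed_points_eq_ker_general A B t ht hAinv hBinv x
end

section
/- Let A, B ∈ ℝ^{n×n}, t > 0, with I + tA and I + tB invertible. Define H_t = (I + tB)^{−1}(I + tA)^{−1}(I + t²AB) and F_t = J_{tA}(2J_{tB} − I) − J_{tB} + I where J_{tA} = (I+tA)^{−1}, J_{tB} = (I+tB)^{−1}. Then F_t = (I + tB) H_t (I + tB)^{−1}; in particular F_t and H_t are similar matrices and have the same eigenvalues. -/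
/-!
Write `P = I + tA`, `Q = I + tB`. Expanding `PQ` gives `I + t²AB = 2I - Q - P + PQ`, so
`Q H_t Q⁻¹ = P⁻¹ (2I - Q - P + PQ) Q⁻¹ = 2P⁻¹Q⁻¹ - P⁻¹ - Q⁻¹ + I`, which is `F_t` multiplied out.
-/

open Matrix

theorem one_add_sq_smul_mul_eq {𝕜 R : Type*} [CommRing 𝕜] [Ring R] [Algebra 𝕜 R]
    (a b : R) (t : 𝕜) :
    1 + t ^ 2 • (a * b) = 2 - (1 + t • b) - (1 + t • a) + (1 + t • a) * (1 + t • b) := by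
  rw [add_mul, one_mul, mul_add, mul_one, smul_mul_smul_comm, ← sq,
    ← one_add_one_eq_two (R := R)]
  abel

theorem mul_two_mul_sub_one_sub_add_one_eq_conj {R : Type*} [Ring R] {p p' q q' : R}
    (hp : p' * p = 1) (hq : q * q' = 1) :
    p' * (2 * q' - 1) - q' + 1 = q * (q' * p' * (2 - q - p + p * q)) * q' := by
  calc p' * (2 * q' - 1) - q' + 1
      = 2 * (p' * q') - p' * (q * q') - (p' * p) * q' + (p' * p) * (q * q') := by
        rw [hp, hq]; noncomm_ring
    _ = p' * (2 - q - p + p * q) * q' := by noncomm_ring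
    _ = q * (q' * p' * (2 - q - p + p * q)) * q' := by
        rw [← mul_assoc, ← mul_assoc, hq, one_mul]

theorem DR_iteration_matrices_similar_general {n : ℕ}
    (A B : Matrix (Fin n) (Fin n) ℝ) (t : ℝ)
    (hAinv : IsUnit (1 + t • A)) (hBinv : IsUnit (1 + t • B)) :
    (1 + t • A)⁻¹ * (2 * (1 + t • B)⁻¹ - 1) - (1 + t • B)⁻¹ + 1 =
      (1 + t • B) * ((1 + t • B)⁻¹ * (1 + t • A)⁻¹ * (1 + t^2 • (A * B))) *
        (1 + t • B)⁻¹ := by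
  rw [one_add_sq_smul_mul_eq]
  exact mul_two_mul_sub_one_sub_add_one_eq_conj
    (nonsing_inv_mul _ ((isUnit_iff_isUnit_det _).mp hAinv))
    (mul_nonsing_inv _ ((isUnit_iff_isUnit_det _).mp hBinv))

/-- The two Douglas–Rachford iteration matrices `F_t` and `H_t` are similar:
`F_t = (I + tB) H_t (I + tB)⁻¹`. -/
theorem DR_iteration_matrices_similar {n : ℕ}
    (A B : Matrix (Fin n) (Fin n) ℝ) (t : ℝ) (ht : 0 < t)
    (hAinv : IsUnit (1 + t • A)) (hBinv : IsUnit (1 + t • B)) :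
    (1 + t • A)⁻¹ * (2 * (1 + t • B)⁻¹ - 1) - (1 + t • B)⁻¹ + 1 =
      (1 + t • B) * ((1 + t • B)⁻¹ * (1 + t • A)⁻¹ * (1 + t^2 • (A * B))) *
        (1 + t • B)⁻¹ :=
  DR_iteration_matrices_similar_general A B t hAinv hBinv
end

section
/- Let {α_n}, {β_n}, {ω_n} be nonnegative real sequences and {τ_n} a sequence with 0 < τ̲ ≤ τ_n ≤ τ̄ for all n, |τ_n − τ_{n+1}| ≤ ω_n for all n, and Σ_{n=0}^∞ ω_n < ∞. If α_{n−1} + τ_n β_{n−1} ≥ α_n + τ_n β_n for all n ≥ 1, then the sequences {α_n} and {β_n} are bounded. -/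
/-!
With the energy `Eₙ = αₙ + τₙ βₙ`, the descent inequality and `|τₙ₊₁ - τₙ| ≤ ωₙ` give
`Eₙ₊₁ ≤ Eₙ + ωₙ βₙ ≤ (1 + ωₙ / τ̲) Eₙ`, since `τ̲ βₙ ≤ Eₙ`. Hence `Eₙ ≤ E₀ exp (Σ ω / τ̲)`,
which bounds both `αₙ ≤ Eₙ` and `βₙ ≤ Eₙ / τ̲`.
-/

open Finset Real

theorem le_mul_exp_sum_of_le_one_add_mul {E c : ℕ → ℝ} (hE : ∀ n, 0 ≤ E n)
    (h : ∀ n, E (n + 1) ≤ (1 + c n) * E n) (n : ℕ) :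
    E n ≤ E 0 * exp (∑ k ∈ range n, c k) := by
  induction n with
  | zero => simp
  | succ n ih =>
    calc E (n + 1) ≤ (1 + c n) * E n := h n
      _ ≤ exp (c n) * (E 0 * exp (∑ k ∈ range n, c k)) :=
        mul_le_mul (by linarith [add_one_le_exp (c n)]) ih (hE n) (exp_pos _).le
      _ = E 0 * exp (∑ k ∈ range (n + 1), c k) := by rw [sum_range_succ, exp_add]; ring

theorem le_mul_exp_tsum_of_le_one_add_mul {E c : ℕ → ℝ} (hE : ∀ n, 0 ≤ E n)
    (hc : ∀ n, 0 ≤ c n) (hsum : Summable c) (h : ∀ n, E (n + 1) ≤ (1 + c n) * E n) (n : ℕ) :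
    E n ≤ E 0 * exp (∑' k, c k) :=
  (le_mul_exp_sum_of_le_one_add_mul hE h n).trans <|
    mul_le_mul_of_nonneg_left (exp_le_exp.mpr (hsum.sum_le_tsum _ fun k _ => hc k)) (hE 0)

theorem mul_le_add_mul_of_le {a b s t : ℝ} (ha : 0 ≤ a) (hb : 0 ≤ b) (hst : s ≤ t) :
    s * b ≤ a + t * b := by
  nlinarith

theorem add_mul_le_one_add_div_mul_of_descent {a b a' b' t t' w s : ℝ} (ha : 0 ≤ a) (hb : 0 ≤ b)
    (hs : 0 < s) (hst : s ≤ t) (hw : |t - t'| ≤ w) (hdesc : a' + t' * b' ≤ a + t' * b) :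
    a' + t' * b' ≤ (1 + w / s) * (a + t * b) := by
  have hw₀ : 0 ≤ w := (abs_nonneg _).trans hw
  have hdrift : (t' - t) * b ≤ w * b :=
    mul_le_mul_of_nonneg_right ((le_abs_self _).trans (abs_sub_comm t t' ▸ hw)) hb
  have hwb : w * b ≤ w / s * (a + t * b) := by
    calc w * b = w / s * (s * b) := by field_simp
      _ ≤ w / s * (a + t * b) :=
        mul_le_mul_of_nonneg_left (mul_le_add_mul_of_le ha hb hst) (div_nonneg hw₀ hs.le)
  calc a' + t' * b' ≤ (a + t * b) + (t' - t) * b := by linarith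
    _ ≤ (a + t * b) + w / s * (a + t * b) := by linarith
    _ = (1 + w / s) * (a + t * b) := by ring

theorem bounded_of_perturbed_descent_general
    (α β ω τ : ℕ → ℝ)
    (hα : ∀ n, 0 ≤ α n) (hβ : ∀ n, 0 ≤ β n)
    (τlo τhi : ℝ) (hτlo : 0 < τlo)
    (hτ : ∀ n, τlo ≤ τ n ∧ τ n ≤ τhi)
    (hτω : ∀ n, |τ n - τ (n+1)| ≤ ω n)
    (hsum : Summable ω)
    (hdesc : ∀ n, α (n+1) + τ (n+1) * β (n+1) ≤ α n + τ (n+1) * β n) :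
    (∃ M : ℝ, ∀ n, α n ≤ M) ∧ (∃ M : ℝ, ∀ n, β n ≤ M) := by
  set E : ℕ → ℝ := fun n => α n + τ n * β n
  have hτβ n : 0 ≤ τ n * β n := mul_nonneg (hτlo.le.trans (hτ n).1) (hβ n)
  have hE n : 0 ≤ E n := add_nonneg (hα n) (hτβ n)
  have hωτ n : 0 ≤ ω n / τlo := div_nonneg ((abs_nonneg _).trans (hτω n)) hτlo.le
  have hbound := le_mul_exp_tsum_of_le_one_add_mul hE hωτ (hsum.div_const τlo) fun n =>
    add_mul_le_one_add_div_mul_of_descent (hα n) (hβ n) hτlo (hτ n).1 (hτω n) (hdesc n)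
  refine ⟨⟨_, fun n => (le_add_of_nonneg_right (hτβ n)).trans (hbound n)⟩,
    ⟨E 0 * exp (∑' k, ω k / τlo) / τlo, fun n => ?_⟩⟩
  rw [le_div_iff₀' hτlo]
  exact (mul_le_add_mul_of_le (hα n) (hβ n) (hτ n).1).trans (hbound n)

/-- Lemma 2: boundedness of sequences satisfying a perturbed monotonicity relation. -/
theorem bounded_of_perturbed_descent
    (α β ω τ : ℕ → ℝ)
    (hα : ∀ n, 0 ≤ α n) (hβ : ∀ n, 0 ≤ β n) (hω : ∀ n, 0 ≤ ω n)
    (τlo τhi : ℝ) (hτlo : 0 < τlo)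
    (hτ : ∀ n, τlo ≤ τ n ∧ τ n ≤ τhi)
    (hτω : ∀ n, |τ n - τ (n+1)| ≤ ω n)
    (hsum : Summable ω)
    (hdesc : ∀ n, α (n+1) + τ (n+1) * β (n+1) ≤ α n + τ (n+1) * β n) :
    (∃ M : ℝ, ∀ n, α n ≤ M) ∧ (∃ M : ℝ, ∀ n, β n ≤ M) :=
  bounded_of_perturbed_descent_general α β ω τ hα hβ τlo τhi hτlo hτ hτω hsum hdesc
end

section
/- Let A, B be maximally monotone operators on a Hilbert space H and consider non-stationary Douglas–Rachford iterates satisfying aⁿ ∈ A(vⁿ), vⁿ + t_n aⁿ = u^{n−1} − t_n b^{n−1}, bⁿ ∈ B(uⁿ), uⁿ + t_n bⁿ = vⁿ + t_n b^{n−1}. Then for every (u, b) in the extended solution set S(A,B) = {(z,w) : w ∈ B(z), −w ∈ A(z)} and every n ≥ 1: ‖u^{n−1} − u‖² + t_n²‖b^{n−1} − b‖² ≥ ‖uⁿ − u‖² + t_n²‖bⁿ − b‖² + ‖uⁿ − vⁿ + t_n(bⁿ + aⁿ)‖². -/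
/-!
Put `T = tₙ`, `w = vⁿ - u`, `d = u^{n-1} - vⁿ` (which equals `uⁿ - vⁿ + T (bⁿ + aⁿ)`) and
`y = T (b^{n-1} - b)`. The two resolvent steps give `T (aⁿ + b) = d - y` and
`(uⁿ - u) + T (bⁿ - b) = w + y`. Monotonicity of `B` makes the last two summands have
nonnegative inner product, so `‖uⁿ - u‖² + T²‖bⁿ - b‖² ≤ ‖w + y‖²`, and monotonicity of `A`
gives `⟪d - y, w⟫ ≥ 0`, which is exactly `‖w + y‖² + ‖d‖² ≤ ‖w + d‖² + ‖y‖²`.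
-/

open RealInnerProductSpace

def MonotoneOp {H : Type*} [NormedAddCommGroup H] [InnerProductSpace ℝ H]
    (A : H → Set H) : Prop :=
  ∀ x y u v, u ∈ A x → v ∈ A y → (0 : ℝ) ≤ ⟪u - v, x - y⟫

def MaximalMonotoneOp {H : Type*} [NormedAddCommGroup H] [InnerProductSpace ℝ H]
    (A : H → Set H) : Prop :=
  MonotoneOp A ∧ ∀ x u, (∀ y v, v ∈ A y → (0 : ℝ) ≤ ⟪u - v, x - y⟫) → u ∈ A x

section DouglasRachford

variable {H : Type*} [NormedAddCommGroup H] [InnerProductSpace ℝ H]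

theorem norm_sq_add_norm_sq_le_norm_add_sq {x y : H} (h : 0 ≤ ⟪x, y⟫) :
    ‖x‖ ^ 2 + ‖y‖ ^ 2 ≤ ‖x + y‖ ^ 2 := by
  rw [norm_add_sq_real]
  linarith

theorem norm_sq_add_norm_sq_add_norm_sq_le {w d y x' y' : H} (hwd : 0 ≤ ⟪d - y, w⟫)
    (hxy : 0 ≤ ⟪x', y'⟫) (hsum : x' + y' = w + y) :
    ‖x'‖ ^ 2 + ‖y'‖ ^ 2 + ‖d‖ ^ 2 ≤ ‖w + d‖ ^ 2 + ‖y‖ ^ 2 :=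
  calc ‖x'‖ ^ 2 + ‖y'‖ ^ 2 + ‖d‖ ^ 2 ≤ ‖w + y‖ ^ 2 + ‖d‖ ^ 2 := by
        rw [← hsum]
        gcongr
        exact norm_sq_add_norm_sq_le_norm_add_sq hxy
    _ ≤ ‖w + d‖ ^ 2 + ‖y‖ ^ 2 := by
        rw [inner_sub_left, real_inner_comm w d, real_inner_comm w y] at hwd
        rw [norm_add_sq_real, norm_add_sq_real]
        linarith

theorem MonotoneOp.inner_smul_nonneg {A : H → Set H} (hA : MonotoneOp A) {T : ℝ} (hT : 0 ≤ T)
    {x y u v : H} (hu : u ∈ A x) (hv : v ∈ A y) : 0 ≤ ⟪T • (u - v), x - y⟫ := by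
  rw [real_inner_smul_left]
  exact mul_nonneg hT (hA x y u v hu hv)

theorem douglasRachford_step_fejer {A B : H → Set H} (hA : MonotoneOp A) (hB : MonotoneOp B)
    {T : ℝ} (hT : 0 ≤ T) {u₀ b₀ v a u b us bs : H}
    (ha : a ∈ A v) (hva : v + T • a = u₀ - T • b₀)
    (hb : b ∈ B u) (hub : u + T • b = v + T • b₀)
    (hbs : bs ∈ B us) (has : -bs ∈ A us) :
    ‖u - us‖ ^ 2 + T ^ 2 * ‖b - bs‖ ^ 2 + ‖u - v + T • (b + a)‖ ^ 2 ≤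
      ‖u₀ - us‖ ^ 2 + T ^ 2 * ‖b₀ - bs‖ ^ 2 := by
  have hd : u - v + T • (b + a) = u₀ - v := by
    linear_combination (norm := module) hub + hva
  have hwd : 0 ≤ ⟪(u₀ - v) - T • (b₀ - bs), v - us⟫ := by
    have key : (u₀ - v) - T • (b₀ - bs) = T • (a - -bs) := by
      linear_combination (norm := module) -hva
    rw [key]
    exact hA.inner_smul_nonneg hT ha has
  have hxy : 0 ≤ ⟪u - us, T • (b - bs)⟫ := by
    rw [real_inner_comm]
    exact hB.inner_smul_nonneg hT hb hbs
  have hsum : (u - us) + T • (b - bs) = (v - us) + T • (b₀ - bs) := by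
    linear_combination (norm := module) hub
  have h := norm_sq_add_norm_sq_add_norm_sq_le hwd hxy hsum
  rwa [sub_add_sub_cancel', norm_smul, norm_smul, mul_pow, mul_pow, Real.norm_eq_abs, sq_abs,
    ← hd] at h

end DouglasRachford

theorem nonstationary_DR_fejer_general
    {H : Type*} [NormedAddCommGroup H] [InnerProductSpace ℝ H]
    (A B : H → Set H) (hA : MaximalMonotoneOp A) (hB : MaximalMonotoneOp B)
    (t : ℕ → ℝ) (ht : ∀ n, 0 < t n)
    (u v a b : ℕ → H)
    (ha : ∀ n, a (n+1) ∈ A (v (n+1)))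
    (hva : ∀ n, v (n+1) + t (n+1) • a (n+1) = u n - t (n+1) • b n)
    (hb : ∀ n, b (n+1) ∈ B (u (n+1)))
    (hub : ∀ n, u (n+1) + t (n+1) • b (n+1) = v (n+1) + t (n+1) • b n)
    (us bs : H) (hbs : bs ∈ B us) (has : -bs ∈ A us) :
    ∀ n,
      ‖u (n+1) - us‖^2 + (t (n+1))^2 * ‖b (n+1) - bs‖^2 +
          ‖u (n+1) - v (n+1) + t (n+1) • (b (n+1) + a (n+1))‖^2 ≤
        ‖u n - us‖^2 + (t (n+1))^2 * ‖b n - bs‖^2 := fun n =>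
  douglasRachford_step_fejer hA.1 hB.1 (ht (n+1)).le (ha n) (hva n) (hb n) (hub n) hbs has

/-- Fejér-type inequality for the non-stationary Douglas–Rachford iterates with
respect to points of the extended solution set `S(A,B)`. -/
theorem nonstationary_DR_fejer
    {H : Type*} [NormedAddCommGroup H] [InnerProductSpace ℝ H] [CompleteSpace H]
    (A B : H → Set H) (hA : MaximalMonotoneOp A) (hB : MaximalMonotoneOp B)
    (t : ℕ → ℝ) (ht : ∀ n, 0 < t n)
    (u v a b : ℕ → H)
    (ha : ∀ n, a (n+1) ∈ A (v (n+1)))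
    (hva : ∀ n, v (n+1) + t (n+1) • a (n+1) = u n - t (n+1) • b n)
    (hb : ∀ n, b (n+1) ∈ B (u (n+1)))
    (hub : ∀ n, u (n+1) + t (n+1) • b (n+1) = v (n+1) + t (n+1) • b n)
    (us bs : H) (hbs : bs ∈ B us) (has : -bs ∈ A us) :
    ∀ n,
      ‖u (n+1) - us‖^2 + (t (n+1))^2 * ‖b (n+1) - bs‖^2 +
          ‖u (n+1) - v (n+1) + t (n+1) • (b (n+1) + a (n+1))‖^2 ≤
        ‖u n - us‖^2 + (t (n+1))^2 * ‖b n - bs‖^2 :=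
  nonstationary_DR_fejer_general A B hA hB t ht u v a b ha hva hb hub us bs hbs has
end

section
/- Let A, B be maximally monotone operators on a real Hilbert space H and {t_n} a positive sequence with 0 < t̲ ≤ t_n ≤ t̄, Σ_{n}|t_n − t_{n+1}| < ∞ (hence t_n → t* > 0). Then the sequence {(uⁿ, bⁿ)} generated by the non-stationary Douglas–Rachford iteration aⁿ ∈ A(vⁿ), vⁿ + t_n aⁿ = u^{n−1} − t_n b^{n−1}, bⁿ ∈ B(uⁿ), uⁿ + t_n bⁿ = vⁿ + t_n b^{n−1} converges weakly to some (u*, b*) in the extended solution set S(A,B) = {(z,w) : w ∈ B(z), −w ∈ A(z)}; in particular 0 ∈ (A + B)(u*). -/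
open RealInnerProductSpace Filter

/-!
For every point `(z, w)` of the extended solution set, the energy
`‖uₙ - z‖² + tₙ²‖bₙ - w‖²` obeys a quasi-Fejér inequality whose error is governed by
`|tₙ - tₙ₊₁|`; hence it converges, the iterates are bounded, and the residuals `uₙ - vₙ₊₁`,
`aₙ₊₁ + bₙ` tend to `0`. Along any ultrafilter a bounded sequence has a weak limit (Riesz
representation of the pointwise limit of `⟪xₙ, ·⟫`), and such a weak cluster point lies in
`S(A, B)`: the sum of the two monotonicity gaps is affine in `(uₙ, bₙ)` up to vanishing terms.
Finally, an Opial argument with the limiting weight `t*²` shows that all cluster points coincide.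
-/

open Topology

section RealSequences

open Finset

variable {V P ε : ℕ → ℝ}

lemma le_mul_exp_sum_of_succ_le_mul (hV : 0 ≤ V 0) (hε : ∀ n, 0 ≤ ε n)
    (h : ∀ n, V (n + 1) ≤ (1 + ε n) * V n) (n : ℕ) :
    V n ≤ V 0 * Real.exp (∑ k ∈ range n, ε k) := by
  induction n with
  | zero => simp
  | succ n ih =>
    calc V (n + 1) ≤ (1 + ε n) * (V 0 * Real.exp (∑ k ∈ range n, ε k)) :=
          (h n).trans (mul_le_mul_of_nonneg_left ih (by linarith [hε n]))
      _ ≤ Real.exp (ε n) * (V 0 * Real.exp (∑ k ∈ range n, ε k)) := by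
          gcongr
          linarith [Real.add_one_le_exp (ε n)]
      _ = V 0 * Real.exp (∑ k ∈ range (n + 1), ε k) := by
          rw [sum_range_succ, Real.exp_add]; ring

lemma exists_tendsto_of_succ_le_add (hV : ∀ n, 0 ≤ V n) (hε : ∀ n, 0 ≤ ε n)
    (hεs : Summable ε) (h : ∀ n, V (n + 1) ≤ V n + ε n) :
    ∃ L, Tendsto V atTop (𝓝 L) := by
  have hanti : Antitone (fun n => V n - ∑ k ∈ range n, ε k) :=
    antitone_nat_of_succ_le fun n => by rw [sum_range_succ]; linarith [h n]
  have hbdd : BddBelow (Set.range (fun n => V n - ∑ k ∈ range n, ε k)) := by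
    refine ⟨-∑' k, ε k, ?_⟩
    rintro _ ⟨n, rfl⟩
    linarith [hV n, hεs.sum_le_tsum (range n) fun k _ => hε k]
  refine ⟨_, ((tendsto_atTop_ciInf hanti hbdd).add hεs.hasSum.tendsto_sum_nat).congr fun n => ?_⟩
  ring

lemma summable_of_succ_add_le_add (hV : ∀ n, 0 ≤ V n) (hP : ∀ n, 0 ≤ P n)
    (hε : ∀ n, 0 ≤ ε n) (hεs : Summable ε) (h : ∀ n, V (n + 1) + P n ≤ V n + ε n) :
    Summable P := by
  have htel : ∀ n, ∑ k ∈ range n, P k + V n ≤ V 0 + ∑ k ∈ range n, ε k := by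
    intro n
    induction n with
    | zero => simp
    | succ n ih => rw [sum_range_succ, sum_range_succ]; linarith [h n]
  refine summable_of_sum_range_le (c := V 0 + ∑' k, ε k) hP fun n => ?_
  linarith [htel n, hV n, hεs.sum_le_tsum (range n) fun k _ => hε k]

lemma bounded_summable_tendsto_of_succ_add_le_mul (hV : ∀ n, 0 ≤ V n) (hP : ∀ n, 0 ≤ P n)
    (hε : ∀ n, 0 ≤ ε n) (hεs : Summable ε) (h : ∀ n, V (n + 1) + P n ≤ (1 + ε n) * V n) :
    (∃ M, ∀ n, V n ≤ M) ∧ Summable P ∧ ∃ L, Tendsto V atTop (𝓝 L) := by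
  set M := V 0 * Real.exp (∑' k, ε k)
  have hM : ∀ n, V n ≤ M := fun n =>
    (le_mul_exp_sum_of_succ_le_mul (hV 0) hε (fun n => by linarith [h n, hP n]) n).trans <|
      mul_le_mul_of_nonneg_left (Real.exp_le_exp.2 (hεs.sum_le_tsum _ fun k _ => hε k)) (hV 0)
  have hstep : ∀ n, V (n + 1) + P n ≤ V n + M * ε n := fun n => by
    nlinarith [h n, hM n, hε n]
  have hMε : ∀ n, 0 ≤ M * ε n := fun n => mul_nonneg ((hV 0).trans (hM 0)) (hε n)
  exact ⟨⟨M, hM⟩, summable_of_succ_add_le_add hV hP hMε (hεs.mul_left M) hstep,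
    exists_tendsto_of_succ_le_add hV hMε (hεs.mul_left M) fun n => by linarith [hstep n, hP n]⟩

end RealSequences

section Hilbert

variable {H : Type*} [NormedAddCommGroup H] [InnerProductSpace ℝ H] {ι : Type*}

def WeakTendsto (x : ι → H) (l : Filter ι) (y : H) : Prop :=
  ∀ w, Tendsto (fun n => ⟪x n, w⟫) l (𝓝 ⟪y, w⟫)

lemma exists_weakTendsto_of_norm_le [CompleteSpace H] {x : ι → H} {C : ℝ}
    (hx : ∀ n, ‖x n‖ ≤ C) (U : Ultrafilter ι) : ∃ y, WeakTendsto x U y := by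
  have hlim : ∀ w, ∃ r, Tendsto (fun n => ⟪x n, w⟫) U (𝓝 r) := fun w => by
    obtain ⟨r, -, hr⟩ := (isCompact_closedBall (0 : ℝ) (C * ‖w‖)).ultrafilter_le_nhds
      (U.map fun n => ⟪x n, w⟫) <| by
        rw [Ultrafilter.coe_map, le_principal_iff, mem_map]
        refine univ_mem' fun n => ?_
        simpa using (abs_real_inner_le_norm _ _).trans
          (mul_le_mul_of_nonneg_right (hx n) (norm_nonneg w))
    exact ⟨r, hr⟩
  choose f hf using hlim
  let φ : H →L[ℝ] ℝ := ContinuousLinearMap.ofTendstoOfBoundedRange f (fun n => innerSL ℝ (x n))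
    (tendsto_pi_nhds.2 hf) <| isBounded_iff_forall_norm_le.2
      ⟨C, by rintro _ ⟨n, rfl⟩; simpa using hx n⟩
  exact ⟨(InnerProductSpace.toDual ℝ H).symm φ, fun w => by
    simpa [φ, InnerProductSpace.toDual_symm_apply] using hf w⟩

lemma tendsto_inner_zero_of_norm_le {l : Filter ι} {f g : ι → H} {C : ℝ}
    (hf : Tendsto f l (𝓝 0)) (hg : ∀ n, ‖g n‖ ≤ C) :
    Tendsto (fun n => ⟪f n, g n⟫) l (𝓝 0) :=
  squeeze_zero_norm (fun n => (norm_inner_le_norm _ _).trans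
    (mul_le_mul_of_nonneg_left (hg n) (norm_nonneg _))) <| by
      simpa using (tendsto_zero_iff_norm_tendsto_zero.1 hf).mul_const C

end Hilbert

section Monotone

variable {H : Type*} [NormedAddCommGroup H] [InnerProductSpace ℝ H] {ι : Type*}
  {A B : H → Set H}

lemma MaximalMonotoneOp.mem_and_neg_mem (hA : MaximalMonotoneOp A) (hB : MaximalMonotoneOp B)
    {z x : H} (h : ∀ y₁ v₁, v₁ ∈ A y₁ → ∀ y₂ v₂, v₂ ∈ B y₂ →
      0 ≤ ⟪x - v₂, z - y₂⟫ + ⟪-x - v₁, z - y₁⟫) :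
    x ∈ B z ∧ -x ∈ A z := by
  by_cases hx : x ∈ B z
  · exact ⟨hx, hA.2 z (-x) fun y v hv => by simpa using h y v hv z x hx⟩
  · exfalso
    -- a witness to `x ∉ B z` forces `-x ∈ A z`, and that in turn forces `x ∈ B z`
    obtain ⟨y₂, v₂, hv₂, hneg⟩ : ∃ y₂ v₂, v₂ ∈ B y₂ ∧ ⟪x - v₂, z - y₂⟫ < 0 := by
      by_contra! hno
      exact hx (hB.2 z x hno)
    have hxA : -x ∈ A z := hA.2 z (-x) fun y v hv => by linarith [h y v hv y₂ v₂ hv₂]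
    exact hx (hB.2 z x fun y v hv => by simpa using h z (-x) hxA y v hv)

lemma inner_sub_add_inner_neg_sub (x z v₁ y₁ v₂ y₂ : H) :
    ⟪x - v₂, z - y₂⟫ + ⟪-x - v₁, z - y₁⟫
      = ⟪x, y₁ - y₂⟫ - ⟪z, v₁ + v₂⟫ + (⟪v₂, y₂⟫ + ⟪v₁, y₁⟫) := by
  simp only [inner_sub_left, inner_sub_right, inner_add_right, inner_neg_left]
  rw [real_inner_comm v₂ z, real_inner_comm v₁ z]
  ring

lemma MaximalMonotoneOp.mem_and_neg_mem_of_weakTendsto (hA : MaximalMonotoneOp A)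
    (hB : MaximalMonotoneOp B) {l : Filter ι} [l.NeBot] {u v a b : ι → H} {z x : H} {C : ℝ}
    (ha : ∀ n, a n ∈ A (v n)) (hb : ∀ n, b n ∈ B (u n))
    (hu : WeakTendsto u l z) (hbx : WeakTendsto b l x)
    (hab : Tendsto (fun n => a n + b n) l (𝓝 0)) (huv : Tendsto (fun n => u n - v n) l (𝓝 0))
    (huC : ∀ n, ‖u n‖ ≤ C) (hbC : ∀ n, ‖b n‖ ≤ C) :
    x ∈ B z ∧ -x ∈ A z := by
  refine hA.mem_and_neg_mem hB fun y₁ v₁ hv₁ y₂ v₂ hv₂ => ?_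
  -- `⟪b n, u n⟫` cancels in the first summand, which is therefore weakly continuous
  have hsplit : ∀ n, ⟪b n - v₂, u n - y₂⟫ + ⟪a n - v₁, v n - y₁⟫
      = (⟪b n - v₂, u n - y₂⟫ + ⟪-b n - v₁, u n - y₁⟫)
        + (⟪a n + b n, u n - y₁⟫ - ⟪a n + b n, u n - v n⟫ + ⟪u n - v n, b n + v₁⟫) := by
    intro n
    simp only [inner_sub_left, inner_sub_right, inner_add_left, inner_add_right, inner_neg_left]
    rw [real_inner_comm (v n) (b n), real_inner_comm (u n) (b n), real_inner_comm (v n) v₁,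
      real_inner_comm (u n) v₁]
    ring
  have hmain : Tendsto (fun n => ⟪b n - v₂, u n - y₂⟫ + ⟪-b n - v₁, u n - y₁⟫) l
      (𝓝 (⟪x - v₂, z - y₂⟫ + ⟪-x - v₁, z - y₁⟫)) := by
    simp only [inner_sub_add_inner_neg_sub]
    exact ((hbx _).sub (hu _)).add_const _
  have hres : Tendsto (fun n => ⟪a n + b n, u n - y₁⟫ - ⟪a n + b n, u n - v n⟫
      + ⟪u n - v n, b n + v₁⟫) l (𝓝 0) := by
    have h₁ := tendsto_inner_zero_of_norm_le hab fun n =>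
      (norm_sub_le _ _).trans (add_le_add_left (huC n) ‖y₁‖)
    have h₂ := tendsto_inner_zero_of_norm_le huv fun n =>
      (norm_add_le _ _).trans (add_le_add_left (hbC n) ‖v₁‖)
    simpa using (h₁.sub (hab.inner huv)).add h₂
  have hlim := (hmain.add hres).congr fun n => (hsplit n).symm
  rw [add_zero] at hlim
  exact ge_of_tendsto' hlim fun n =>
    add_nonneg (hB.1 _ _ _ _ (hb n) hv₂) (hA.1 _ _ _ _ (ha n) hv₁)

end Monotone

section Opial

variable {H : Type*} [NormedAddCommGroup H] [InnerProductSpace ℝ H]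
  {x y : ℕ → H} {τ : ℕ → ℝ} {τs : ℝ}

lemma eq_of_weakTendsto_of_tendsto_weighted_sq_dist (hτ : Tendsto τ atTop (𝓝 τs))
    (hτs : 0 < τs) {z w z' w' : H}
    (hzw : ∃ L, Tendsto (fun n => ‖x n - z‖ ^ 2 + τ n * ‖y n - w‖ ^ 2) atTop (𝓝 L))
    (hzw' : ∃ L, Tendsto (fun n => ‖x n - z'‖ ^ 2 + τ n * ‖y n - w'‖ ^ 2) atTop (𝓝 L))
    {l l' : Filter ℕ} [l.NeBot] [l'.NeBot] (hl : l ≤ atTop) (hl' : l' ≤ atTop)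
    (hx : WeakTendsto x l z) (hy : WeakTendsto y l w)
    (hx' : WeakTendsto x l' z') (hy' : WeakTendsto y l' w') :
    z = z' ∧ w = w' := by
  obtain ⟨L, hL⟩ := hzw
  obtain ⟨L', hL'⟩ := hzw'
  -- the difference of the two weighted distances is affine in `(x n, y n)`
  have hexp : ∀ n, (‖x n - z‖ ^ 2 + τ n * ‖y n - w‖ ^ 2) - (‖x n - z'‖ ^ 2 + τ n * ‖y n - w'‖ ^ 2)
      = 2 * ⟪x n, z' - z⟫ + (‖z‖ ^ 2 - ‖z'‖ ^ 2)
        + τ n * (2 * ⟪y n, w' - w⟫ + (‖w‖ ^ 2 - ‖w'‖ ^ 2)) := by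
    intro n
    simp only [norm_sub_sq_real, inner_sub_right]
    ring
  have hlim : ∀ {m : Filter ℕ} [m.NeBot], m ≤ atTop → ∀ ξ η,
      WeakTendsto x m ξ → WeakTendsto y m η →
      L - L' = 2 * ⟪ξ, z' - z⟫ + (‖z‖ ^ 2 - ‖z'‖ ^ 2)
        + τs * (2 * ⟪η, w' - w⟫ + (‖w‖ ^ 2 - ‖w'‖ ^ 2)) := by
    intro m _ hm ξ η hξ hη
    refine tendsto_nhds_unique ((hL.sub hL').mono_left hm) ?_
    refine Tendsto.congr (fun n => (hexp n).symm) ?_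
    exact (((hξ _).const_mul 2).add_const _).add
      ((hτ.mono_left hm).mul (((hη _).const_mul 2).add_const _))
  have h := (hlim hl z w hx hy).symm.trans (hlim hl' z' w' hx' hy')
  have hsum : ‖z - z'‖ ^ 2 + τs * ‖w - w'‖ ^ 2 = 0 := by
    simp only [norm_sub_sq_real, inner_sub_right, real_inner_comm z z', real_inner_comm w w',
      real_inner_self_eq_norm_sq] at h ⊢
    linarith
  have hz : ‖z - z'‖ ^ 2 = 0 := by nlinarith [sq_nonneg ‖z - z'‖, sq_nonneg ‖w - w'‖]
  have hw : ‖w - w'‖ ^ 2 = 0 := by nlinarith [sq_nonneg ‖z - z'‖, sq_nonneg ‖w - w'‖]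
  simp only [sq_eq_zero_iff, norm_eq_zero, sub_eq_zero] at hz hw
  exact ⟨hz, hw⟩

theorem exists_weakTendsto_of_opial [CompleteSpace H] (hτ : Tendsto τ atTop (𝓝 τs))
    (hτs : 0 < τs) {C : ℝ} (hxC : ∀ n, ‖x n‖ ≤ C) (hyC : ∀ n, ‖y n‖ ≤ C) {S : Set (H × H)}
    (hconv : ∀ p ∈ S, ∃ L, Tendsto (fun n => ‖x n - p.1‖ ^ 2 + τ n * ‖y n - p.2‖ ^ 2) atTop (𝓝 L))
    (hclust : ∀ (U : Ultrafilter ℕ) (p : H × H), (U : Filter ℕ) ≤ atTop →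
      WeakTendsto x U p.1 → WeakTendsto y U p.2 → p ∈ S) :
    ∃ p ∈ S, WeakTendsto x atTop p.1 ∧ WeakTendsto y atTop p.2 := by
  have hlim : ∀ U : Ultrafilter ℕ, (U : Filter ℕ) ≤ atTop →
      ∃ p ∈ S, WeakTendsto x U p.1 ∧ WeakTendsto y U p.2 := fun U hU => by
    obtain ⟨z, hz⟩ := exists_weakTendsto_of_norm_le hxC U
    obtain ⟨w, hw⟩ := exists_weakTendsto_of_norm_le hyC U
    exact ⟨(z, w), hclust U (z, w) hU hz hw, hz, hw⟩
  obtain ⟨U₀, hU₀⟩ := Ultrafilter.exists_le (atTop : Filter ℕ)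
  obtain ⟨p, hp, hxp, hyp⟩ := hlim U₀ hU₀
  have hall : ∀ U : Ultrafilter ℕ, (U : Filter ℕ) ≤ atTop →
      WeakTendsto x U p.1 ∧ WeakTendsto y U p.2 := fun U hU => by
    obtain ⟨q, hq, hxq, hyq⟩ := hlim U hU
    obtain ⟨h₁, h₂⟩ := eq_of_weakTendsto_of_tendsto_weighted_sq_dist hτ hτs (hconv p hp)
      (hconv q hq) hU₀ hU hxp hyp hxq hyq
    exact ⟨h₁ ▸ hxq, h₂ ▸ hyq⟩
  exact ⟨p, hp, fun w => (tendsto_iff_ultrafilter _ _ _).2 fun U hU => (hall U hU).1 w,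
    fun w => (tendsto_iff_ultrafilter _ _ _).2 fun U hU => (hall U hU).2 w⟩

end Opial

lemma exists_norm_le_of_weighted_sq_dist_le {E : Type*} [SeminormedAddCommGroup E]
    {x y : ℕ → E} {τ : ℕ → ℝ} {z w : E} {tlo M : ℝ}
    (htlo : 0 < tlo) (hτ : ∀ n, tlo ≤ τ n)
    (h : ∀ n, ‖x n - z‖ ^ 2 + τ n ^ 2 * ‖y n - w‖ ^ 2 ≤ M) :
    ∃ C, (∀ n, ‖x n‖ ≤ C) ∧ ∀ n, ‖y n‖ ≤ C := by
  have hx : ∀ n, ‖x n - z‖ ≤ √M := fun n => Real.le_sqrt_of_sq_le (by nlinarith [h n])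
  have hy : ∀ n, ‖y n - w‖ ≤ √M / tlo := fun n => by
    rw [le_div_iff₀ htlo]
    refine Real.le_sqrt_of_sq_le ?_
    have : tlo ^ 2 ≤ τ n ^ 2 := pow_le_pow_left₀ htlo.le (hτ n) 2
    nlinarith [h n, sq_nonneg ‖x n - z‖, sq_nonneg ‖y n - w‖]
  refine ⟨√M + ‖z‖ + (√M / tlo + ‖w‖), fun n => ?_, fun n => ?_⟩
  · have := norm_le_norm_sub_add (x n) z
    linarith [hx n, norm_nonneg w, div_nonneg (Real.sqrt_nonneg M) htlo.le]
  · have := norm_le_norm_sub_add (y n) w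
    linarith [hy n, norm_nonneg z, Real.sqrt_nonneg M]

section DouglasRachford

variable {H : Type*} [NormedAddCommGroup H] [InnerProductSpace ℝ H] {A B : H → Set H}

lemma MonotoneOp.dr_step_fejer (hA : MonotoneOp A) (hB : MonotoneOp B) {τ : ℝ} (hτ : 0 ≤ τ)
    {u v a b u' b' z w : H} (ha : a ∈ A v) (hb' : b' ∈ B u')
    (hva : v + τ • a = u - τ • b) (hub : u' + τ • b' = v + τ • b)
    (hwB : w ∈ B z) (hwA : -w ∈ A z) :
    ‖u' - z‖ ^ 2 + τ ^ 2 * ‖b' - w‖ ^ 2 + ‖u - v‖ ^ 2 ≤ ‖u - z‖ ^ 2 + τ ^ 2 * ‖b - w‖ ^ 2 := by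
  have hv : v = u - τ • (a + b) := by linear_combination (norm := module) hva
  have hu' : u' = u - τ • (a + b') := by linear_combination (norm := module) hub + hva
  have hAz := hA _ _ _ _ ha hwA
  have hBz := hB _ _ _ _ hb' hwB
  subst hv hu'
  -- the two monotonicity gaps are exactly the slack in the inequality
  have key : ‖u - τ • (a + b') - z‖ ^ 2 + τ ^ 2 * ‖b' - w‖ ^ 2 + ‖u - (u - τ • (a + b))‖ ^ 2
      + 2 * τ * ⟪a - -w, u - τ • (a + b) - z⟫ + 2 * τ * ⟪b' - w, u - τ • (a + b') - z⟫
      = ‖u - z‖ ^ 2 + τ ^ 2 * ‖b - w‖ ^ 2 := by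
    simp only [← real_inner_self_eq_norm_sq, inner_sub_left, inner_sub_right, inner_add_left,
      inner_add_right, inner_neg_left, real_inner_smul_left, real_inner_smul_right]
    simp only [real_inner_comm]
    ring
  nlinarith [mul_nonneg hτ hAz, mul_nonneg hτ hBz]

lemma add_sq_mul_le_one_add_mul {τ τ' tlo thi x y : ℝ} (htlo : 0 < tlo)
    (hτ : tlo ≤ τ ∧ τ ≤ thi) (hτ' : tlo ≤ τ' ∧ τ' ≤ thi) (hx : 0 ≤ x) (hy : 0 ≤ y) :
    x + τ' ^ 2 * y ≤ (1 + 2 * thi / tlo ^ 2 * |τ - τ'|) * (x + τ ^ 2 * y) := by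
  have hsq : τ' ^ 2 - τ ^ 2 ≤ 2 * thi * |τ - τ'| := by
    rw [abs_sub_comm]
    nlinarith [le_abs_self (τ' - τ), abs_nonneg (τ' - τ)]
  have hy_le : tlo ^ 2 * y ≤ x + τ ^ 2 * y := by
    have : tlo ^ 2 ≤ τ ^ 2 := pow_le_pow_left₀ htlo.le hτ.1 2
    nlinarith
  have hcoef : 0 ≤ 2 * thi / tlo ^ 2 * |τ - τ'| := by
    have : 0 ≤ thi := by linarith
    positivity
  calc x + τ' ^ 2 * y = (x + τ ^ 2 * y) + (τ' ^ 2 - τ ^ 2) * y := by ring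
    _ ≤ (x + τ ^ 2 * y) + 2 * thi / tlo ^ 2 * |τ - τ'| * (tlo ^ 2 * y) := by
        have : 2 * thi / tlo ^ 2 * |τ - τ'| * (tlo ^ 2 * y) = 2 * thi * |τ - τ'| * y := by
          field_simp
        rw [this]
        gcongr
    _ ≤ (1 + 2 * thi / tlo ^ 2 * |τ - τ'|) * (x + τ ^ 2 * y) := by nlinarith

structure IsNonstationaryDR (A B : H → Set H) (t : ℕ → ℝ) (u v a b : ℕ → H) : Prop where
  b_zero_mem : b 0 ∈ B (u 0)
  a_mem : ∀ n, a (n + 1) ∈ A (v (n + 1))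
  v_add_smul : ∀ n, v (n + 1) + t (n + 1) • a (n + 1) = u n - t (n + 1) • b n
  b_mem : ∀ n, b (n + 1) ∈ B (u (n + 1))
  u_add_smul : ∀ n, u (n + 1) + t (n + 1) • b (n + 1) = v (n + 1) + t (n + 1) • b n

namespace IsNonstationaryDR

variable {t : ℕ → ℝ} {u v a b : ℕ → H} {tlo thi : ℝ}

lemma mem_B (hdr : IsNonstationaryDR A B t u v a b) : ∀ n, b n ∈ B (u n)
  | 0 => hdr.b_zero_mem
  | n + 1 => hdr.b_mem n

lemma sub_succ_eq_smul (hdr : IsNonstationaryDR A B t u v a b) (n : ℕ) :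
    u n - v (n + 1) = t (n + 1) • (a (n + 1) + b n) := by
  linear_combination (norm := module) -hdr.v_add_smul n

lemma weighted_sq_dist_succ_add_le (hdr : IsNonstationaryDR A B t u v a b)
    (hA : MonotoneOp A) (hB : MonotoneOp B) (htlo : 0 < tlo)
    (hbnd : ∀ n, tlo ≤ t n ∧ t n ≤ thi) {z w : H} (hwB : w ∈ B z) (hwA : -w ∈ A z) (n : ℕ) :
    ‖u (n + 1) - z‖ ^ 2 + t (n + 1) ^ 2 * ‖b (n + 1) - w‖ ^ 2 + ‖u n - v (n + 1)‖ ^ 2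
      ≤ (1 + 2 * thi / tlo ^ 2 * |t n - t (n + 1)|) * (‖u n - z‖ ^ 2 + t n ^ 2 * ‖b n - w‖ ^ 2) :=
  (hA.dr_step_fejer hB (htlo.trans_le (hbnd (n + 1)).1).le (hdr.a_mem n) (hdr.b_mem n)
    (hdr.v_add_smul n) (hdr.u_add_smul n) hwB hwA).trans <|
    add_sq_mul_le_one_add_mul htlo (hbnd n) (hbnd (n + 1)) (sq_nonneg _) (sq_nonneg _)

lemma bounded_summable_tendsto (hdr : IsNonstationaryDR A B t u v a b)
    (hA : MonotoneOp A) (hB : MonotoneOp B) (htlo : 0 < tlo)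
    (hbnd : ∀ n, tlo ≤ t n ∧ t n ≤ thi) (hsum : Summable (fun n => |t n - t (n + 1)|))
    {z w : H} (hwB : w ∈ B z) (hwA : -w ∈ A z) :
    (∃ M, ∀ n, ‖u n - z‖ ^ 2 + t n ^ 2 * ‖b n - w‖ ^ 2 ≤ M) ∧
      Summable (fun n => ‖u n - v (n + 1)‖ ^ 2) ∧
      ∃ L, Tendsto (fun n => ‖u n - z‖ ^ 2 + t n ^ 2 * ‖b n - w‖ ^ 2) atTop (𝓝 L) := by
  have hthi : 0 ≤ thi := htlo.le.trans ((hbnd 0).1.trans (hbnd 0).2)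
  exact bounded_summable_tendsto_of_succ_add_le_mul (fun n => by positivity)
    (fun n => by positivity) (fun n => by positivity) (hsum.mul_left (2 * thi / tlo ^ 2))
    (hdr.weighted_sq_dist_succ_add_le hA hB htlo hbnd hwB hwA)

lemma tendsto_residual (hdr : IsNonstationaryDR A B t u v a b) (htlo : 0 < tlo)
    (hlo : ∀ n, tlo ≤ t n) (hP : Summable (fun n => ‖u n - v (n + 1)‖ ^ 2)) :
    Tendsto (fun n => u n - v (n + 1)) atTop (𝓝 0) ∧
      Tendsto (fun n => a (n + 1) + b n) atTop (𝓝 0) := by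
  have huv : Tendsto (fun n => ‖u n - v (n + 1)‖) atTop (𝓝 0) := by
    simpa [Real.sqrt_sq (norm_nonneg _)] using hP.tendsto_atTop_zero.sqrt
  refine ⟨tendsto_zero_iff_norm_tendsto_zero.2 huv,
    squeeze_zero_norm (a := fun n => ‖u n - v (n + 1)‖ / tlo) (fun n => ?_)
      (by simpa using huv.div_const tlo)⟩
  rw [le_div_iff₀ htlo, hdr.sub_succ_eq_smul, norm_smul, Real.norm_of_nonneg
    (htlo.trans_le (hlo _)).le, mul_comm]
  exact mul_le_mul_of_nonneg_right (hlo _) (norm_nonneg _)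

end IsNonstationaryDR

end DouglasRachford

/-- Weak convergence of the non-stationary Douglas–Rachford method to a point of
the extended solution set `S(A,B)`; in particular `0 ∈ (A + B)(u*)`. -/
theorem nonstationary_DR_weak_convergence
    {H : Type*} [NormedAddCommGroup H] [InnerProductSpace ℝ H] [CompleteSpace H]
    (A B : H → Set H) (hA : MaximalMonotoneOp A) (hB : MaximalMonotoneOp B)
    (hS : ∃ z w : H, w ∈ B z ∧ -w ∈ A z)
    (t : ℕ → ℝ) (tlo thi : ℝ) (htlo : 0 < tlo)
    (hbnd : ∀ n, tlo ≤ t n ∧ t n ≤ thi)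
    (hsum : Summable (fun n => |t n - t (n+1)|))
    (u v a b : ℕ → H)
    (hb0 : b 0 ∈ B (u 0))
    (ha : ∀ n, a (n+1) ∈ A (v (n+1)))
    (hva : ∀ n, v (n+1) + t (n+1) • a (n+1) = u n - t (n+1) • b n)
    (hb : ∀ n, b (n+1) ∈ B (u (n+1)))
    (hub : ∀ n, u (n+1) + t (n+1) • b (n+1) = v (n+1) + t (n+1) • b n) :
    ∃ us bs : H, bs ∈ B us ∧ -bs ∈ A us ∧
      (∀ w : H, Tendsto (fun n => ⟪u n, w⟫) atTop (nhds ⟪us, w⟫)) ∧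
      (∀ w : H, Tendsto (fun n => ⟪b n, w⟫) atTop (nhds ⟪bs, w⟫)) ∧
      (∃ p ∈ A us, ∃ q ∈ B us, p + q = 0) := by
  have hdr : IsNonstationaryDR A B t u v a b := ⟨hb0, ha, hva, hb, hub⟩
  have hlyap := fun z w (hwB : w ∈ B z) (hwA : -w ∈ A z) =>
    hdr.bounded_summable_tendsto hA.1 hB.1 htlo hbnd hsum hwB hwA
  obtain ⟨z₀, w₀, hwB₀, hwA₀⟩ := hS
  obtain ⟨⟨M, hM⟩, hP, -⟩ := hlyap z₀ w₀ hwB₀ hwA₀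
  obtain ⟨C, huC, hbC⟩ :=
    exists_norm_le_of_weighted_sq_dist_le htlo (fun n => (hbnd n).1) hM
  obtain ⟨huv, hab⟩ := hdr.tendsto_residual htlo (fun n => (hbnd n).1) hP
  obtain ⟨ts, hts⟩ := cauchySeq_tendsto_of_complete <| cauchySeq_of_summable_dist (f := t) <| by
    simpa only [Real.dist_eq] using hsum
  have hts_pos : 0 < ts ^ 2 :=
    pow_pos (htlo.trans_le (ge_of_tendsto' hts fun n => (hbnd n).1)) 2
  obtain ⟨⟨us, bs⟩, ⟨hbs, hnbs⟩, hu_weak, hb_weak⟩ :=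
    exists_weakTendsto_of_opial (hts.pow 2) hts_pos huC hbC
      (S := {p | p.2 ∈ B p.1 ∧ -p.2 ∈ A p.1}) (fun p hp => (hlyap p.1 p.2 hp.1 hp.2).2.2)
      fun U p hU hxU hyU => hA.mem_and_neg_mem_of_weakTendsto hB (v := fun n => v (n + 1)) ha
        hdr.mem_B hxU hyU (hab.mono_left hU) (huv.mono_left hU) huC hbC
  exact ⟨us, bs, hbs, hnbs, hu_weak, hb_weak, -bs, hnbs, bs, hbs, neg_add_cancel bs⟩
end
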